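/- Let m ≥ n ≥ 2 be integers, let σ > 0 and β₁ be real numbers, and let r be a real number with 0 ≤ r ≤ n. For each real s > 1 define F_s(a) = Σ_{i=1}^n w_i·a_i − (n·m/2)·a_n + (n·m/(2σ²))·( (a_n²/4)·log s + a_n·β₁ ) on the outage set S(n,r). Then the infimum over S(n,r) of F_s converges to (m−n+1)·(n−r) as s → ∞. -/
import Mathlib


open Filter

/-- For integers `m ≥ n ≥ 2`, reals `σ > 0`, `β₁`, and real `0 ≤ r ≤ n`, the infimum
over the outage set `S(n,r)` of
`F_s(a) = Σ w_i·a_i − (n·m/2)·a_n + (n·m/(2σ²))·((a_n²/4)·log s + a_n·β₁)`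
converges to `(m−n+1)·(n−r)` as `s → ∞`. -/
theorem outage_exponent_log_normal
    (m n : ℕ) (hn : 2 ≤ n) (hnm : n ≤ m) (σ β₁ : ℝ) (hσ : 0 < σ)
    (r : ℝ) (hr0 : 0 ≤ r) (hrn : r ≤ n) :
    let w : Fin n → ℝ := fun i => ((m : ℝ) - n + 2 * ((i : ℕ) + 1) - 1) / 2
    let S : Set (Fin n → ℝ) :=
      {a | Antitone a ∧ (∀ i, 0 ≤ a i) ∧ 2 * ((n : ℝ) - r) ≤ ∑ i, a i}
    let F : ℝ → (Fin n → ℝ) → ℝ := fun s a =>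
      ∑ i, w i * a i - ((n : ℝ) * m / 2) * a ⟨n - 1, by omega⟩
        + ((n : ℝ) * m / (2 * σ ^ 2)) *
            ((a ⟨n - 1, by omega⟩) ^ 2 / 4 * Real.log s + a ⟨n - 1, by omega⟩ * β₁)
    Tendsto (fun s : ℝ => sInf (F s '' S)) atTop
      (nhds (((m : ℝ) - n + 1) * ((n : ℝ) - r))) := by
  intro w S F
  haveI : NeZero n := ⟨by omega⟩
  have hpf : n - 1 < n := by omega
  set e : Fin n := ⟨n - 1, hpf⟩ with he
  set L : ℝ := ((m : ℝ) - n + 1) * ((n : ℝ) - r) with hLdef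
  set K : ℝ := (n : ℝ) * m / (2 * σ ^ 2) with hKdef
  set B : ℝ := K * β₁ - (n : ℝ) * m / 2 with hBdef
  set C : ℝ := B ^ 2 / K with hCdef
  have hn0 : (0 : ℝ) < n := by
    have : 0 < n := by omega
    exact_mod_cast this
  have hm0 : (0 : ℝ) < m := by
    have : 0 < m := by omega
    exact_mod_cast this
  have hmn : (n : ℝ) ≤ m := by exact_mod_cast hnm
  have hrn' : r ≤ (n : ℝ) := hrn
  have hK0 : 0 < K := by
    rw [hKdef]; positivity
  have hw : ∀ i : Fin n, w i = ((m : ℝ) - n + 2 * ((i : ℕ) + 1) - 1) / 2 := fun i => rfl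
  have hFd : ∀ (s : ℝ) (a : Fin n → ℝ), F s a
      = ∑ i, w i * a i - ((n : ℝ) * m / 2) * a e
        + K * ((a e) ^ 2 / 4 * Real.log s + a e * β₁) := fun s a => rfl
  have hw0 : ∀ i : Fin n, w 0 ≤ w i := by
    intro i
    rw [hw, hw]
    have h1 : (0 : ℝ) ≤ ((i : ℕ) : ℝ) := Nat.cast_nonneg _
    simp only [Fin.val_zero]
    push_cast
    linarith
  have hw0nn : 0 ≤ w 0 := by
    rw [hw]
    simp only [Fin.val_zero]
    push_cast
    linarith
  have hw0L : w 0 * (2 * ((n : ℝ) - r)) = L := by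
    rw [hw, hLdef]
    simp only [Fin.val_zero]
    push_cast
    ring
  -- lower bound on the sum part
  have hsum : ∀ a ∈ S, L ≤ ∑ i, w i * a i := by
    rintro a ⟨_, hpos, hs⟩
    calc L = w 0 * (2 * ((n : ℝ) - r)) := hw0L.symm
      _ ≤ w 0 * ∑ i, a i := mul_le_mul_of_nonneg_left hs hw0nn
      _ = ∑ i, w 0 * a i := Finset.mul_sum _ _ _
      _ ≤ ∑ i, w i * a i :=
        Finset.sum_le_sum fun i _ => mul_le_mul_of_nonneg_right (hw0 i) (hpos i)
  -- quadratic lower bound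
  have quad : ∀ (A Bq t : ℝ), 0 < A → -(Bq ^ 2) / (4 * A) ≤ A * t ^ 2 + Bq * t := by
    intro A Bq t hA
    rw [div_le_iff₀ (by positivity : (0 : ℝ) < 4 * A)]
    nlinarith [sq_nonneg (2 * A * t + Bq)]
  -- the witness point
  set a₀ : Fin n → ℝ := fun i => if i = 0 then 2 * ((n : ℝ) - r) else 0 with ha₀def
  have ha₀nn : ∀ i, 0 ≤ a₀ i := by
    intro i
    rw [ha₀def]
    dsimp only
    split
    · linarith
    · exact le_rfl
  have ha₀S : a₀ ∈ S := by
    refine ⟨?_, ha₀nn, ?_⟩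
    · intro i j hij
      rcases eq_or_ne j 0 with hj | hj
      · subst hj
        have : i = 0 := le_antisymm hij (Fin.zero_le i)
        subst this; exact le_refl _
      · have : a₀ j = 0 := by rw [ha₀def]; simp [hj]
        rw [this]; exact ha₀nn i
    · have : ∑ i, a₀ i = 2 * ((n : ℝ) - r) := by
        rw [ha₀def]; simp [Finset.sum_ite_eq']
      rw [this]
  have ha₀e : a₀ e = 0 := by
    rw [ha₀def]
    have : e ≠ 0 := by
      rw [he]; simp [Fin.ext_iff]; omega
    simp [this]
  have hFa₀ : ∀ s : ℝ, F s a₀ = L := by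
    intro s
    rw [hFd, ha₀e]
    have hsum0 : ∑ i, w i * a₀ i = w 0 * (2 * ((n : ℝ) - r)) := by
      rw [ha₀def]
      simp only [mul_ite, mul_zero]
      simp [Finset.sum_ite_eq']
    rw [hsum0, hw0L]
    ring
  -- lower bound for F on S when s > 1
  have hlow : ∀ s : ℝ, 1 < s → ∀ a ∈ S, L - C / Real.log s ≤ F s a := by
    intro s hs a haS
    have hls : 0 < Real.log s := Real.log_pos hs
    have hA : 0 < K * Real.log s / 4 := by positivity
    have hq := quad (K * Real.log s / 4) B (a e) hA
    have hCeq : C / Real.log s = B ^ 2 / (4 * (K * Real.log s / 4)) := by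
      rw [hCdef]
      field_simp
    have hring : F s a = (∑ i, w i * a i)
        + ((K * Real.log s / 4) * (a e) ^ 2 + B * (a e)) := by
      rw [hFd, hBdef]; ring
    have hs' := hsum a haS
    rw [hring]
    have : -(B ^ 2) / (4 * (K * Real.log s / 4))
        = -(C / Real.log s) := by rw [hCeq]; ring
    linarith [hq, this.symm.le]
  -- limit of the lower bound
  have hlim : Tendsto (fun s : ℝ => L - C / Real.log s) atTop (nhds L) := by
    have h0 : Tendsto (fun s : ℝ => C / Real.log s) atTop (nhds 0) :=
      Tendsto.div_atTop tendsto_const_nhds Real.tendsto_log_atTop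
    simpa using tendsto_const_nhds.sub h0
  refine tendsto_of_tendsto_of_tendsto_of_le_of_le' hlim tendsto_const_nhds ?_ ?_
  · filter_upwards [eventually_gt_atTop (1 : ℝ)] with s hs
    refine le_csInf ⟨F s a₀, a₀, ha₀S, rfl⟩ ?_
    rintro x ⟨a, haS, rfl⟩
    exact hlow s hs a haS
  · filter_upwards [eventually_gt_atTop (1 : ℝ)] with s hs
    have hbdd : BddBelow (F s '' S) := by
      refine ⟨L - C / Real.log s, ?_⟩
      rintro x ⟨a, haS, rfl⟩
      exact hlow s hs a haS
    have : F s a₀ ∈ F s '' S := ⟨a₀, ha₀S, rfl⟩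
    have h := csInf_le hbdd this
    rwa [hFa₀] at h
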